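/- For all integers i, j with 0 ≤ i < j ≤ d, the Poisson bracket satisfies {a_i, a_j} = j·(d−i)·q^{d−j}·Q^{i}·eu₀^{(j−i−1)} − i·(d−j)·q^{d−j−1}·Q^{i−1}·eu₀^{(j−i+1)}, where eu₀^{(k)} := (x·X)^k + (y·Y)^k and, when i = 0, the second summand is interpreted as 0 (its scalar coefficient i·(d−j) vanishes). -/
import Mathlib


open MvPolynomial

/-- `q = x·y`, with variables `x = X 0`, `y = X 1`, `X = X 2`, `Y = X 3`. -/
noncomputable def qP : MvPolynomial (Fin 4) ℂ := X 0 * X 1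
/-- `Q = X·Y`. -/
noncomputable def QP : MvPolynomial (Fin 4) ℂ := X 2 * X 3
/-- `a_j = x^{d−j}·Y^j + y^{d−j}·X^j`. -/
noncomputable def aP (d j : ℕ) : MvPolynomial (Fin 4) ℂ :=
  X 0 ^ (d - j) * X 3 ^ j + X 1 ^ (d - j) * X 2 ^ j
/-- `eu₀^{(k)} = (xX)^k + (yY)^k`. -/
noncomputable def euk (k : ℕ) : MvPolynomial (Fin 4) ℂ :=
  (X 0 * X 2) ^ k + (X 1 * X 3) ^ k

/-- The Poisson bracket
`{f,g} = ∂f/∂x·∂g/∂X − ∂f/∂X·∂g/∂x + ∂f/∂y·∂g/∂Y − ∂f/∂Y·∂g/∂y`. -/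
noncomputable def pb (f g : MvPolynomial (Fin 4) ℂ) : MvPolynomial (Fin 4) ℂ :=
  pderiv 0 f * pderiv 2 g - pderiv 2 f * pderiv 0 g
    + pderiv 1 f * pderiv 3 g - pderiv 3 f * pderiv 1 g

lemma guard_pow (n : ℕ) (v : Fin 4) :
    (n : MvPolynomial (Fin 4) ℂ) * X v ^ n = (n : MvPolynomial (Fin 4) ℂ) * (X v * X v ^ (n - 1)) := by
  cases n with
  | zero => simp
  | succ m => rw [Nat.add_sub_cancel, pow_succ]; ring

/-- for `0 ≤ i < j ≤ d`,
`{a_i,a_j} = j(d−i)·q^{d−j}·Q^i·eu₀^{(j−i−1)} − i(d−j)·q^{d−j−1}·Q^{i−1}·eu₀^{(j−i+1)}`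
(the second summand has vanishing scalar coefficient when `i = 0`). -/
theorem stmt9 (d : ℕ) (hd : 1 ≤ d) (i j : ℕ) (hij : i < j) (hj : j ≤ d) :
    pb (aP d i) (aP d j) =
      C ((j : ℂ) * ((d : ℂ) - (i : ℂ))) * qP ^ (d - j) * QP ^ i * euk (j - i - 1) -
        C ((i : ℂ) * ((d : ℂ) - (j : ℂ))) * qP ^ (d - j - 1) * QP ^ (i - 1) *
          euk (j - i + 1) := by
  obtain ⟨c, rfl⟩ : ∃ c, j = i + c + 1 := ⟨j - i - 1, by omega⟩
  obtain ⟨a, rfl⟩ : ∃ a, d = i + c + 1 + a := ⟨d - (i + c + 1), by omega⟩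
  have e0 := guard_pow a 0
  have e1 := guard_pow a 1
  have e2 := guard_pow i 2
  have e3 := guard_pow i 3
  simp only [pb, aP, qP, QP, euk,
    show i + c + 1 + a - i = c + 1 + a by omega,
    show i + c + 1 + a - (i + c + 1) = a by omega,
    show i + c + 1 - i - 1 = c by omega,
    show i + c + 1 + a - (i + c + 1) - 1 = a - 1 by omega,
    show i + c + 1 - i + 1 = c + 2 by omega]
  simp only [map_mul, map_sub, map_add, map_natCast, map_one, pderiv_pow, pderiv_mul,
    pderiv_X_self, pderiv_X_of_ne (by decide : (0:Fin 4) ≠ 2),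
    pderiv_X_of_ne (by decide : (0:Fin 4) ≠ 3), pderiv_X_of_ne (by decide : (0:Fin 4) ≠ 1),
    pderiv_X_of_ne (by decide : (1:Fin 4) ≠ 0), pderiv_X_of_ne (by decide : (1:Fin 4) ≠ 2),
    pderiv_X_of_ne (by decide : (1:Fin 4) ≠ 3), pderiv_X_of_ne (by decide : (2:Fin 4) ≠ 0),
    pderiv_X_of_ne (by decide : (2:Fin 4) ≠ 1), pderiv_X_of_ne (by decide : (2:Fin 4) ≠ 3),
    pderiv_X_of_ne (by decide : (3:Fin 4) ≠ 0), pderiv_X_of_ne (by decide : (3:Fin 4) ≠ 1),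
    pderiv_X_of_ne (by decide : (3:Fin 4) ≠ 2),
    mul_zero, zero_mul, add_zero, zero_add, mul_one,
    show c + 1 + a - 1 = c + a by omega,
    show i + c + 1 - 1 = i + c by omega]
  push_cast
  linear_combination
    (-(i : MvPolynomial (Fin 4) ℂ) * X 2 ^ i * (X 0 ^ (c+1) * X 2 ^ (c+1) * X 1 ^ (a-1) * X 3 ^ (i-1))) * e0 +
    (-(a : MvPolynomial (Fin 4) ℂ) * X 0 * X 0 ^ (a-1) * (X 0 ^ (c+1) * X 2 ^ (c+1) * X 1 ^ (a-1) * X 3 ^ (i-1))) * e2 +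
    (-(a : MvPolynomial (Fin 4) ℂ) * X 1 ^ a * (X 3 ^ (c+1) * X 1 ^ (c+1) * X 0 ^ (a-1) * X 2 ^ (i-1))) * e3 +
    (-(i : MvPolynomial (Fin 4) ℂ) * X 3 * X 3 ^ (i-1) * (X 3 ^ (c+1) * X 1 ^ (c+1) * X 0 ^ (a-1) * X 2 ^ (i-1))) * e1
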